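/- arXiv:math/0609802 — 4 statements merged into one kernel-verified Lean document; each statement's English description precedes it below -/
import Mathlib

section
/- Let $W$ be a non-negative integer-valued random variable and $Z$ a real random variable such that $\mathbb{E}[|Z| R^W] < \infty$ for some $R > 2$. Then for every integer $j \ge 0$, $\mathbb{E}[Z \cdot \mathbf{1}\{W = j\}] = \sum_{k=j}^{\infty} (-1)^{k-j} \binom{k}{j} \frac{1}{k!} \mathbb{E}[Z \, W^{(k)}]$. -/
open MeasureTheory

open Filter

lemma key_nat (n j k : ℕ) :
    (j + k).choose j * n.choose (j + k) = n.choose j * (n - j).choose k := by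
  rcases le_or_gt (j + k) n with h | h
  · rw [mul_comm, Nat.choose_mul (Nat.le_add_right j k), Nat.add_sub_cancel_left]
  · rw [Nat.choose_eq_zero_of_lt h, mul_zero]
    rcases le_or_gt j n with hj | hj
    · rw [Nat.choose_eq_zero_of_lt (show n - j < k by omega), mul_zero]
    · rw [Nat.choose_eq_zero_of_lt hj, zero_mul]

lemma key_real (n j k : ℕ) :
    ((j + k).choose j : ℝ) * (1 / ((j + k).factorial : ℝ)) * (n.descFactorial (j + k) : ℝ)
      = (n.choose j : ℝ) * ((n - j).choose k : ℝ) := by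
  have hf : ((j + k).factorial : ℝ) ≠ 0 := Nat.cast_ne_zero.2 (Nat.factorial_ne_zero _)
  have h2 : ((j + k).choose j : ℝ) * (n.choose (j + k) : ℝ)
      = (n.choose j : ℝ) * ((n - j).choose k : ℝ) := by exact_mod_cast key_nat n j k
  rw [Nat.descFactorial_eq_factorial_mul_choose, Nat.cast_mul]
  calc ((j + k).choose j : ℝ) * (1 / ((j + k).factorial : ℝ))
        * (((j + k).factorial : ℝ) * (n.choose (j + k) : ℝ))
      = ((j + k).choose j : ℝ) * (n.choose (j + k) : ℝ)
        * ((1 / ((j + k).factorial : ℝ)) * ((j + k).factorial : ℝ)) := by ring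
    _ = _ := by rw [one_div_mul_cancel hf, mul_one, h2]

lemma alt_sum_real (m : ℕ) :
    (∑ i ∈ Finset.range (m + 1), (-1 : ℝ) ^ i * (m.choose i : ℝ))
      = if m = 0 then 1 else 0 := by
  have h := Int.alternating_sum_range_choose (n := m)
  have h2 : ((∑ i ∈ Finset.range (m + 1), (-1 : ℤ) ^ i * (m.choose i : ℤ) : ℤ) : ℝ)
      = ∑ i ∈ Finset.range (m + 1), (-1 : ℝ) ^ i * (m.choose i : ℝ) := by push_cast; ring
  rw [← h2, h]
  split_ifs <;> simp

lemma point_hasSum (Zv : ℝ) (n j : ℕ) :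
    HasSum (fun k : ℕ => Zv * ((-1 : ℝ) ^ k * (n.choose j : ℝ) * ((n - j).choose k : ℝ)))
      (if n = j then Zv else 0) := by
  have h0 : ∀ k ∉ Finset.range (n - j + 1),
      Zv * ((-1 : ℝ) ^ k * (n.choose j : ℝ) * ((n - j).choose k : ℝ)) = 0 := by
    intro k hk
    rw [Finset.mem_range, not_lt] at hk
    rw [Nat.choose_eq_zero_of_lt (show n - j < k by omega)]
    simp
  have h := hasSum_sum_of_ne_finset_zero (L := SummationFilter.unconditional ℕ) h0
  have hsum : (∑ k ∈ Finset.range (n - j + 1),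
      Zv * ((-1 : ℝ) ^ k * (n.choose j : ℝ) * ((n - j).choose k : ℝ)))
      = if n = j then Zv else 0 := by
    have : (∑ k ∈ Finset.range (n - j + 1),
        Zv * ((-1 : ℝ) ^ k * (n.choose j : ℝ) * ((n - j).choose k : ℝ)))
        = Zv * (n.choose j : ℝ) *
          ∑ k ∈ Finset.range (n - j + 1), (-1 : ℝ) ^ k * ((n - j).choose k : ℝ) := by
      rw [Finset.mul_sum]; exact Finset.sum_congr rfl fun k _ => by ring
    rw [this, alt_sum_real]
    rcases lt_trichotomy n j with h1 | h1 | h1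
    · rw [if_neg h1.ne, Nat.choose_eq_zero_of_lt h1]
      simp
    · subst h1
      rw [if_pos rfl, if_pos (by omega), Nat.choose_self]
      simp
    · rw [if_neg (by omega), if_neg h1.ne']
      simp
  rwa [hsum] at h

lemma tsum_bound_eq (c : ℝ) (n j : ℕ) :
    (∑' k : ℕ, c * ((n.choose j : ℝ) * ((n - j).choose k : ℝ)))
      = c * ((n.choose j : ℝ) * 2 ^ (n - j)) := by
  have h0 : ∀ k ∉ Finset.range (n - j + 1),
      c * ((n.choose j : ℝ) * ((n - j).choose k : ℝ)) = 0 := by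
    intro k hk
    rw [Finset.mem_range, not_lt] at hk
    rw [Nat.choose_eq_zero_of_lt (show n - j < k by omega)]
    simp
  rw [(hasSum_sum_of_ne_finset_zero h0).tsum_eq, ← Finset.mul_sum, ← Finset.mul_sum]
  congr 1
  have : ((2 : ℝ) ^ (n - j)) = ((2 ^ (n - j) : ℕ) : ℝ) := by push_cast; ring
  rw [this, ← Nat.sum_range_choose (n - j)]
  push_cast
  ring

lemma const_bound (R : ℝ) (hR : 2 < R) (j : ℕ) :
    ∃ C : ℝ, 0 ≤ C ∧ ∀ n : ℕ, (n.choose j : ℝ) * 2 ^ (n - j) ≤ C * R ^ n := by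
  have hr : 1 < R / 2 := by linarith
  have htend := tendsto_pow_const_div_const_pow_of_one_lt j hr
  obtain ⟨C, hC⟩ := htend.bddAbove_range
  refine ⟨C, le_trans (by positivity : (0:ℝ) ≤ (1:ℕ)^j / (R/2)^(1:ℕ))
    (hC ⟨1, rfl⟩), fun n => ?_⟩
  have h1 : ((n : ℝ)) ^ j ≤ C * (R / 2) ^ n := by
    have := hC ⟨n, rfl⟩
    rwa [div_le_iff₀ (by positivity)] at this
  have h2 : (n.choose j : ℝ) ≤ (n : ℝ) ^ j := by exact_mod_cast Nat.choose_le_pow n j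
  have h3 : (2 : ℝ) ^ (n - j) ≤ 2 ^ n := by
    apply pow_le_pow_right₀ one_le_two (Nat.sub_le n j)
  calc (n.choose j : ℝ) * 2 ^ (n - j) ≤ (n : ℝ) ^ j * 2 ^ n := by
        apply mul_le_mul h2 h3 (by positivity) (by positivity)
    _ ≤ (C * (R / 2) ^ n) * 2 ^ n := by
        apply mul_le_mul_of_nonneg_right h1 (by positivity)
    _ = C * R ^ n := by
        rw [mul_assoc, ← mul_pow]
        congr 2
        field_simp

/-- Lemma 3.1(ii): inclusion-exclusion for `E[Z · 1{W = j}]` via weighted factorial moments. -/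
theorem stmt_1 {Ω : Type*} [MeasurableSpace Ω] (μ : Measure Ω) [IsProbabilityMeasure μ]
    (W : Ω → ℕ) (hW : Measurable W) (Z : Ω → ℝ) (hZ : Measurable Z)
    (R : ℝ) (hR : 2 < R)
    (hint : Integrable (fun ω => |Z ω| * R ^ (W ω)) μ) (j : ℕ) :
    HasSum (fun k : ℕ => (-1 : ℝ) ^ k * ((j + k).choose j : ℝ) *
        (1 / (Nat.factorial (j + k) : ℝ)) *
        ∫ ω, Z ω * ((W ω).descFactorial (j + k) : ℝ) ∂μ)
      (∫ ω, (if W ω = j then Z ω else 0) ∂μ) := by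
  set F : ℕ → Ω → ℝ := fun k ω => (-1 : ℝ) ^ k * ((j + k).choose j : ℝ) *
      (1 / (Nat.factorial (j + k) : ℝ)) * (Z ω * ((W ω).descFactorial (j + k) : ℝ)) with hF
  have hF_eq : ∀ k ω, F k ω
      = Z ω * ((-1 : ℝ) ^ k * ((W ω).choose j : ℝ) * (((W ω) - j).choose k : ℝ)) := by
    intro k ω
    have hkey := key_real (W ω) j k
    simp only [hF]
    calc (-1 : ℝ) ^ k * ((j + k).choose j : ℝ) * (1 / (Nat.factorial (j + k) : ℝ)) *
          (Z ω * ((W ω).descFactorial (j + k) : ℝ))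
        = (((j + k).choose j : ℝ) * (1 / (Nat.factorial (j + k) : ℝ)) *
            ((W ω).descFactorial (j + k) : ℝ)) * ((-1 : ℝ) ^ k * Z ω) := by ring
      _ = (((W ω).choose j : ℝ) * (((W ω) - j).choose k : ℝ)) * ((-1 : ℝ) ^ k * Z ω) := by
          rw [hkey]
      _ = _ := by ring
  set bound : ℕ → Ω → ℝ := fun k ω =>
      |Z ω| * (((W ω).choose j : ℝ) * (((W ω) - j).choose k : ℝ)) with hbd
  have hF_meas : ∀ k, AEStronglyMeasurable (F k) μ := by
    intro k
    apply Measurable.aestronglyMeasurable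
    exact (measurable_const.mul (hZ.mul ((measurable_from_top (f := fun n : ℕ =>
      ((n.descFactorial (j + k) : ℝ)))).comp hW)))
  have h_bound : ∀ k, ∀ᵐ ω ∂μ, ‖F k ω‖ ≤ bound k ω := by
    intro k
    filter_upwards with ω
    rw [hF_eq, Real.norm_eq_abs, abs_mul]
    apply le_of_eq
    congr 1
    rw [abs_mul, abs_mul, abs_pow, abs_neg, abs_one, one_pow, one_mul,
      Nat.abs_cast, Nat.abs_cast]
  have bound_summable : ∀ᵐ ω ∂μ, Summable fun k => bound k ω := by
    filter_upwards with ω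
    apply summable_of_ne_finset_zero (s := Finset.range (W ω - j + 1))
    intro k hk
    rw [Finset.mem_range, not_lt] at hk
    simp only [hbd, Nat.choose_eq_zero_of_lt (show W ω - j < k by omega)]
    simp
  obtain ⟨C, hC0, hC⟩ := const_bound R hR j
  have bound_integrable : Integrable (fun ω => ∑' k, bound k ω) μ := by
    have htsum : ∀ ω, (∑' k, bound k ω)
        = |Z ω| * (((W ω).choose j : ℝ) * 2 ^ (W ω - j)) := fun ω => tsum_bound_eq _ _ _
    rw [show (fun ω => ∑' k, bound k ω)
        = fun ω => |Z ω| * (((W ω).choose j : ℝ) * 2 ^ (W ω - j)) from funext htsum]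
    apply Integrable.mono' (hint.const_mul C)
    · exact (hZ.abs.mul ((measurable_from_top (f := fun n : ℕ =>
        ((n.choose j : ℝ) * 2 ^ (n - j)))).comp hW)).aestronglyMeasurable
    · filter_upwards with ω
      rw [Real.norm_eq_abs, abs_of_nonneg (by positivity)]
      calc |Z ω| * (((W ω).choose j : ℝ) * 2 ^ (W ω - j))
          ≤ |Z ω| * (C * R ^ (W ω)) :=
            mul_le_mul_of_nonneg_left (hC (W ω)) (abs_nonneg _)
        _ = C * (|Z ω| * R ^ (W ω)) := by ring
  have h_lim : ∀ᵐ ω ∂μ, HasSum (fun k => F k ω) (if W ω = j then Z ω else 0) := by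
    filter_upwards with ω
    have h := point_hasSum (Z ω) (W ω) j
    rwa [show (fun k => F k ω)
      = fun k : ℕ => Z ω * ((-1 : ℝ) ^ k * ((W ω).choose j : ℝ) * (((W ω) - j).choose k : ℝ))
      from funext fun k => hF_eq k ω]
  have H := hasSum_integral_of_dominated_convergence bound hF_meas h_bound
    bound_summable bound_integrable h_lim
  have heq : ∀ k, (∫ ω, F k ω ∂μ)
      = (-1 : ℝ) ^ k * ((j + k).choose j : ℝ) * (1 / (Nat.factorial (j + k) : ℝ)) *
        ∫ ω, Z ω * ((W ω).descFactorial (j + k) : ℝ) ∂μ := by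
    intro k
    simp only [hF]
    rw [integral_const_mul]
  rw [show (fun k : ℕ => (-1 : ℝ) ^ k * ((j + k).choose j : ℝ) *
      (1 / (Nat.factorial (j + k) : ℝ)) *
      ∫ ω, Z ω * ((W ω).descFactorial (j + k) : ℝ) ∂μ) = fun k => ∫ ω, F k ω ∂μ from
    funext fun k => (heq k).symm]
  exact H
end

section
/- In the configuration model, the factorial moments of the number of loops $X_u$ at a vertex $u$ and the number of edges $X_e$ between the endpoints of a pair $e = \{v,w\}$ satisfy the bounds $\mathbb{E}[X_u^{(k)}] \le (d_u^2/N)^k$ and $\mathbb{E}[X_{vw}^{(k)}] \le (d_v d_w / N)^k$ for every $k \ge 1$, provided $2N \ge 4k$. -/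
open Finset

/-- The set of configurations on `M` half-edges: fixed-point-free involutions
(perfect matchings) of `Fin M`. -/
def matchings (M : ℕ) : Finset (Equiv.Perm (Fin M)) :=
  Finset.univ.filter (fun σ => (∀ x, σ x ≠ x) ∧ ∀ x, σ (σ x) = x)

/-- The number of loops at vertex `u` in the multigraph given by the vertex map `vm`
(assigning each half-edge to its vertex) and the configuration `σ`. -/
def numLoops {M n : ℕ} (vm : Fin M → Fin n) (σ : Equiv.Perm (Fin M)) (u : Fin n) : ℕ :=
  (Finset.univ.filter (fun x => vm x = u ∧ vm (σ x) = u)).card / 2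

/-- The number of edges between the distinct vertices `v` and `w` in the multigraph
given by the vertex map `vm` and the configuration `σ`. -/
def numEdges {M n : ℕ} (vm : Fin M → Fin n) (σ : Equiv.Perm (Fin M)) (v w : Fin n) : ℕ :=
  (Finset.univ.filter (fun x => vm x = v ∧ vm (σ x) = w)).card


def pt {k M : ℕ} (h : Fin k → Fin M × Fin M) : Fin k × Bool → Fin M :=
  fun p => if p.2 then (h p.1).1 else (h p.1).2

lemma pt_tt {k M : ℕ} (h : Fin k → Fin M × Fin M) (i : Fin k) : pt h (i, true) = (h i).1 := rfl
lemma pt_ff {k M : ℕ} (h : Fin k → Fin M × Fin M) (i : Fin k) : pt h (i, false) = (h i).2 := rfl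

lemma conj_mem_matchings {M : ℕ} {σ : Equiv.Perm (Fin M)} (hσ : σ ∈ matchings M)
    (τ : Equiv.Perm (Fin M)) : (τ * σ * τ⁻¹) ∈ matchings M := by
  simp only [matchings, mem_filter, mem_univ, true_and] at hσ ⊢
  refine ⟨fun x hx => ?_, fun x => ?_⟩
  · apply hσ.1 (τ⁻¹ x)
    have : τ⁻¹ ((τ * σ * τ⁻¹) x) = τ⁻¹ x := congrArg (fun z => τ⁻¹ z) hx
    simpa [Equiv.Perm.mul_apply] using this
  · simp [Equiv.Perm.mul_apply, hσ.2]

lemma matchings_nonempty (N : ℕ) : (matchings (2 * N)).Nonempty := by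
  classical
  let e : Fin 2 × Fin N ≃ Fin (2 * N) := finProdFinEquiv
  let σ0 : Equiv.Perm (Fin 2 × Fin N) := Equiv.prodCongr (Equiv.swap 0 1) (Equiv.refl _)
  have h0 : ∀ z : Fin 2, Equiv.swap (0 : Fin 2) 1 z ≠ z := by decide
  refine ⟨e.permCongr σ0, ?_⟩
  simp only [matchings, mem_filter, mem_univ, true_and]
  constructor
  · intro x hx
    have : σ0 (e.symm x) = e.symm x := by
      have := congrArg e.symm hx
      simpa [Equiv.permCongr_apply] using this
    exact h0 (e.symm x).1 (congrArg Prod.fst this)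
  · intro x
    simp [Equiv.permCongr_apply, σ0, Equiv.prodCongr_apply, Prod.map,
      Equiv.swap_apply_self]

lemma key {N : ℕ} : ∀ (k : ℕ) (P : Fin k → Fin (2 * N) × Fin (2 * N)),
    Function.Injective (pt P) → 2 * k ≤ N →
    N ^ k * ((matchings (2 * N)).filter (fun σ => ∀ i, σ (P i).1 = (P i).2)).card
      ≤ (matchings (2 * N)).card := by
  intro k
  induction k with
  | zero =>
    intro P _ _
    simpa using card_le_card (filter_subset _ _)
  | succ k ih =>
    intro P hinj hkN
    set a := (P 0).1 with ha
    set b := (P 0).2 with hb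
    set P' : Fin k → Fin (2 * N) × Fin (2 * N) := fun i => P i.succ with hP'
    have hinj' : Function.Injective (pt P') := by
      intro p q hpq
      have : pt P (p.1.succ, p.2) = pt P (q.1.succ, q.2) := by
        cases p with | mk i bi => cases q with | mk j bj =>
        cases bi <;> cases bj <;> simpa [pt, P'] using hpq
      have := hinj this
      cases p with | mk i bi => cases q with | mk j bj =>
      simp only [Prod.mk.injEq] at this ⊢
      exact ⟨Fin.succ_injective _ this.1, this.2⟩
    have hab : a ≠ b := by
      intro h
      have : ((0 : Fin (k+1)), true) = ((0 : Fin (k+1)), false) := hinj h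
      simp at this
    set A := (matchings (2 * N)).filter (fun σ => ∀ i, σ (P i).1 = (P i).2) with hA
    set A' := (matchings (2 * N)).filter (fun σ => ∀ i, σ (P' i).1 = (P' i).2) with hA'
    set Y : Finset (Fin (2 * N)) :=
      univ \ (insert a (Finset.image (pt P') univ)) with hY
    -- points of P' differ from a and b
    have hPa : ∀ q : Fin k × Bool, pt P' q ≠ a := by
      intro q h
      have : pt P (q.1.succ, q.2) = pt P (0, true) := by
        cases q with | mk i bi => cases bi <;> simpa [pt, P'] using h
      have := hinj this
      simp [Fin.succ_ne_zero] at this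
    have hPb : ∀ q : Fin k × Bool, pt P' q ≠ b := by
      intro q h
      have : pt P (q.1.succ, q.2) = pt P (0, false) := by
        cases q with | mk i bi => cases bi <;> simpa [pt, P'] using h
      have := hinj this
      simp [Fin.succ_ne_zero] at this
    have hYcard : N ≤ Y.card := by
      have h1 : (insert a (Finset.image (pt P') univ)).card ≤ 1 + 2 * k := by
        calc (insert a (Finset.image (pt P') univ)).card
            ≤ (Finset.image (pt P') univ).card + 1 := card_insert_le _ _
          _ ≤ (univ : Finset (Fin k × Bool)).card + 1 := by
              exact Nat.add_le_add_right (card_image_le) 1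
          _ = 2 * k + 1 := by simp [Fintype.card_prod, mul_comm]
          _ = 1 + 2 * k := by omega
      have h2 : Y.card = 2 * N - (insert a (Finset.image (pt P') univ)).card := by
        rw [hY, card_sdiff_of_subset (subset_univ _)]
        simp
      omega
    -- value of the conjugated permutation at points of P', and at a
    have hval : ∀ (σ : Equiv.Perm (Fin (2*N))) (y : Fin (2*N)), y ∈ Y →
        (∀ i, σ (P i).1 = (P i).2) →
        (∀ i, ((Equiv.swap b y) * σ * (Equiv.swap b y)) (P' i).1 = (P' i).2) ∧
        ((Equiv.swap b y) * σ * (Equiv.swap b y)) a = y := by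
      intro σ y hyY hσP
      have hyP : ∀ q : Fin k × Bool, pt P' q ≠ y := by
        intro q h
        rw [hY, mem_sdiff] at hyY
        exact hyY.2 (mem_insert_of_mem (mem_image.mpr ⟨q, mem_univ _, h⟩))
      have hya : a ≠ y := by
        intro h
        rw [hY, mem_sdiff] at hyY
        exact hyY.2 (h ▸ mem_insert_self a _)
      constructor
      · intro i
        have h1 : Equiv.swap b y (P' i).1 = (P' i).1 :=
          Equiv.swap_apply_of_ne_of_ne (hPb (i, true)) (hyP (i, true))
        have h2 : Equiv.swap b y (P' i).2 = (P' i).2 :=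
          Equiv.swap_apply_of_ne_of_ne (hPb (i, false)) (hyP (i, false))
        have h3 : σ (P' i).1 = (P' i).2 := hσP i.succ
        simp [Equiv.Perm.mul_apply, h1, h3, h2]
      · have h1 : Equiv.swap b y a = a := Equiv.swap_apply_of_ne_of_ne hab hya
        have h3 : σ a = b := hσP 0
        simp [Equiv.Perm.mul_apply, h1, h3]
    have hcard : A.card * Y.card ≤ A'.card := by
      rw [← card_product]
      apply card_le_card_of_injOn (fun p => (Equiv.swap b p.2) * p.1 * (Equiv.swap b p.2))
      · rintro ⟨σ, y⟩ hp
        rw [mem_coe, mem_product] at hp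
        obtain ⟨hσA, hyY⟩ := hp
        rw [hA, mem_filter] at hσA
        obtain ⟨hσM, hσP⟩ := hσA
        rw [mem_coe, hA', mem_filter]
        refine ⟨?_, (hval σ y hyY hσP).1⟩
        have := conj_mem_matchings hσM (Equiv.swap b y)
        simpa [Equiv.swap_inv] using this
      · rintro ⟨σ, y⟩ hp ⟨σ', y'⟩ hp' heq
        dsimp only at heq
        simp only [coe_product, Set.mem_prod, mem_coe] at hp hp'
        obtain ⟨hσA, hyY⟩ := hp
        obtain ⟨hσA', hyY'⟩ := hp'
        rw [hA, mem_filter] at hσA hσA'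
        have e1 := (hval σ y hyY hσA.2).2
        have e2 := (hval σ' y' hyY' hσA'.2).2
        have hyy : y = y' := by rw [← e1, ← e2, heq]
        subst hyy
        have : σ = σ' := by
          have h2 : (Equiv.swap b y) * ((Equiv.swap b y) * σ * (Equiv.swap b y)) * (Equiv.swap b y)
              = (Equiv.swap b y) * ((Equiv.swap b y) * σ' * (Equiv.swap b y)) * (Equiv.swap b y) := by
            rw [heq]
          simpa [← mul_assoc, Equiv.swap_mul_self, mul_assoc] using h2
        simp [this]
    have hih := ih P' hinj' (by omega)
    calc N ^ (k+1) * A.card = N ^ k * (N * A.card) := by ring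
      _ ≤ N ^ k * (A.card * Y.card) := by
          apply Nat.mul_le_mul_left
          calc N * A.card = A.card * N := by ring
            _ ≤ A.card * Y.card := Nat.mul_le_mul_left _ hYcard
      _ ≤ N ^ k * A'.card := Nat.mul_le_mul_left _ hcard
      _ ≤ (matchings (2 * N)).card := hih


lemma loops_le {M n : ℕ} (vm : Fin M → Fin n) (u : Fin n) (k : ℕ)
    {σ : Equiv.Perm (Fin M)} (hσ : σ ∈ matchings M) :
    (numLoops vm σ u).descFactorial k ≤
      ((univ : Finset (Fin k → Fin M × Fin M)).filter
        (fun h => (∀ i, σ (h i).1 = (h i).2) ∧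
          ((∀ i, vm (h i).1 = u ∧ vm (h i).2 = u) ∧ Function.Injective (pt h)))).card := by
  classical
  simp only [matchings, mem_filter, mem_univ, true_and] at hσ
  obtain ⟨hfp, hinv⟩ := hσ
  set L : Finset (Fin M) := univ.filter (fun x => vm x = u ∧ vm (σ x) = u) with hL
  set L' : Finset (Fin M) := L.filter (fun x => x < σ x) with hL'
  have hLclosed : ∀ x ∈ L, σ x ∈ L := by
    intro x hx
    rw [hL, mem_filter] at hx ⊢
    exact ⟨mem_univ _, hx.2.2, by rw [hinv x]; exact hx.2.1⟩
  have hsplit : L'.card + (L.filter (fun x => σ x < x)).card = L.card := by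
    have h1 := card_filter_add_card_filter_not (s := L) (p := fun x => x < σ x)
    have h2 : L.filter (fun x => ¬ x < σ x) = L.filter (fun x => σ x < x) := by
      apply filter_congr
      intro x hx
      simp only [not_lt, eq_iff_iff]
      constructor
      · intro h; exact lt_of_le_of_ne h (fun he => hfp x he)
      · intro h; exact le_of_lt h
    rw [h2] at h1
    exact h1
  have hbij : (L.filter (fun x => σ x < x)).card = L'.card := by
    apply card_bij (fun x _ => σ x)
    · intro x hx
      rw [mem_filter] at hx
      rw [hL', mem_filter]
      exact ⟨hLclosed x hx.1, by rw [hinv x]; exact hx.2⟩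
    · intro x hx y hy hxy
      exact σ.injective hxy
    · intro y hy
      rw [hL', mem_filter] at hy
      refine ⟨σ y, ?_, hinv y⟩
      rw [mem_filter]
      exact ⟨hLclosed y hy.1, by rw [hinv y]; exact hy.2⟩
  have hcard : L.card = 2 * L'.card := by omega
  have hnum : numLoops vm σ u = L'.card := by
    rw [numLoops, ← hL, hcard, Nat.mul_div_cancel_left _ (by norm_num)]
  rw [hnum]
  have hemb : L'.card.descFactorial k = Fintype.card (Fin k ↪ ↥(L' : Finset (Fin M))) := by
    rw [Fintype.card_embedding_eq, Fintype.card_coe, Fintype.card_fin]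
  rw [hemb]
  set T := ((univ : Finset (Fin k → Fin M × Fin M)).filter
        (fun h => (∀ i, σ (h i).1 = (h i).2) ∧
          ((∀ i, vm (h i).1 = u ∧ vm (h i).2 = u) ∧ Function.Injective (pt h)))) with hT
  have hlt : ∀ (f : Fin k ↪ ↥L') (i : Fin k), (f i : Fin M) < σ (f i) := by
    intro f i
    exact (mem_filter.mp (f i).2).2
  have hFm : ∀ f : Fin k ↪ ↥L', (fun i => ((f i : Fin M), σ (f i))) ∈ T := by
    intro f
    rw [hT, mem_filter]
    refine ⟨mem_univ _, fun i => rfl, fun i => ?_, ?_⟩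
    · have h1 := (mem_filter.mp (mem_filter.mp (f i).2).1).2
      exact ⟨h1.1, h1.2⟩
    · intro p q hpq
      cases p with | mk i bi => cases q with | mk j bj =>
      cases bi <;> cases bj <;>
        simp only [pt, if_true, if_false, Bool.false_eq_true] at hpq
      · -- σ (f i) = σ (f j)
        have h1 : (f i : Fin M) = f j := σ.injective hpq
        have h2 : f i = f j := Subtype.ext h1
        simp [f.injective h2]
      · -- σ (f i) = f j
        exfalso
        have h2 : σ (f j) = (f i : Fin M) := by rw [← hpq, hinv]
        have h3 := hlt f i
        have h4 := hlt f j
        rw [hpq] at h3; rw [h2] at h4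
        exact absurd (h3.trans h4) (lt_irrefl _)
      · -- f i = σ (f j)
        exfalso
        have h2 : σ (f i) = (f j : Fin M) := by rw [hpq, hinv]
        have h3 := hlt f i
        have h4 := hlt f j
        rw [h2] at h3; rw [← hpq] at h4
        exact absurd (h3.trans h4) (lt_irrefl _)
      · have h2 : f i = f j := Subtype.ext hpq
        simp [f.injective h2]
  have hle : Fintype.card (Fin k ↪ ↥L') ≤ Fintype.card ↥T := by
    apply Fintype.card_le_of_injective
      (fun f => (⟨fun i => ((f i : Fin M), σ (f i)), hFm f⟩ : ↥T))
    intro f g hfg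
    apply DFunLike.ext
    intro i
    have h1 : (fun i => ((f i : Fin M), σ (f i))) = (fun i => ((g i : Fin M), σ (g i))) :=
      congrArg Subtype.val hfg
    exact Subtype.ext (congrArg Prod.fst (congrFun h1 i))
  calc Fintype.card (Fin k ↪ ↥L') ≤ Fintype.card ↥T := hle
    _ = T.card := Fintype.card_coe T

lemma edges_le {M n : ℕ} (vm : Fin M → Fin n) (v w : Fin n) (hvw : v ≠ w) (k : ℕ)
    {σ : Equiv.Perm (Fin M)} (hσ : σ ∈ matchings M) :
    (numEdges vm σ v w).descFactorial k ≤
      ((univ : Finset (Fin k → Fin M × Fin M)).filter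
        (fun h => (∀ i, σ (h i).1 = (h i).2) ∧
          ((∀ i, vm (h i).1 = v ∧ vm (h i).2 = w) ∧ Function.Injective (pt h)))).card := by
  classical
  simp only [matchings, mem_filter, mem_univ, true_and] at hσ
  obtain ⟨hfp, hinv⟩ := hσ
  set E : Finset (Fin M) := univ.filter (fun x => vm x = v ∧ vm (σ x) = w) with hE
  have hnum : numEdges vm σ v w = E.card := rfl
  rw [hnum]
  have hemb : E.card.descFactorial k = Fintype.card (Fin k ↪ ↥E) := by
    rw [Fintype.card_embedding_eq, Fintype.card_coe, Fintype.card_fin]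
  rw [hemb]
  set T := ((univ : Finset (Fin k → Fin M × Fin M)).filter
        (fun h => (∀ i, σ (h i).1 = (h i).2) ∧
          ((∀ i, vm (h i).1 = v ∧ vm (h i).2 = w) ∧ Function.Injective (pt h)))) with hT
  have hEm : ∀ f : Fin k ↪ ↥E, ∀ i, vm (f i : Fin M) = v ∧ vm (σ (f i)) = w := by
    intro f i
    exact (mem_filter.mp (f i).2).2
  have hFm : ∀ f : Fin k ↪ ↥E, (fun i => ((f i : Fin M), σ (f i))) ∈ T := by
    intro f
    rw [hT, mem_filter]
    refine ⟨mem_univ _, fun i => rfl, fun i => hEm f i, ?_⟩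
    intro p q hpq
    cases p with | mk i bi => cases q with | mk j bj =>
    cases bi <;> cases bj <;>
      simp only [pt, if_true, if_false, Bool.false_eq_true] at hpq
    · have h2 : f i = f j := Subtype.ext (σ.injective hpq)
      simp [f.injective h2]
    · -- σ (f i) = f j : then vm (f j) = w but also = v
      exfalso
      have h1 : vm (σ (f i) : Fin M) = w := (hEm f i).2
      have h2 : vm (f j : Fin M) = v := (hEm f j).1
      rw [hpq] at h1
      exact hvw (h2 ▸ h1 ▸ rfl)
    · exfalso
      have h1 : vm (σ (f j) : Fin M) = w := (hEm f j).2
      have h2 : vm (f i : Fin M) = v := (hEm f i).1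
      rw [← hpq] at h1
      exact hvw (h2 ▸ h1 ▸ rfl)
    · have h2 : f i = f j := Subtype.ext hpq
      simp [f.injective h2]
  have hle : Fintype.card (Fin k ↪ ↥E) ≤ Fintype.card ↥T := by
    apply Fintype.card_le_of_injective
      (fun f => (⟨fun i => ((f i : Fin M), σ (f i)), hFm f⟩ : ↥T))
    intro f g hfg
    apply DFunLike.ext
    intro i
    have h1 : (fun i => ((f i : Fin M), σ (f i))) = (fun i => ((g i : Fin M), σ (g i))) :=
      congrArg Subtype.val hfg
    exact Subtype.ext (congrArg Prod.fst (congrFun h1 i))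
  calc Fintype.card (Fin k ↪ ↥E) ≤ Fintype.card ↥T := hle
    _ = T.card := Fintype.card_coe T

lemma assembly {N : ℕ} (k : ℕ) (Q : Fin (2*N) → Fin (2*N) → Prop)
    [∀ x y, Decidable (Q x y)] (hkN : 2 * k ≤ N) (D : ℕ)
    (hD : ((univ : Finset (Fin (2*N) × Fin (2*N))).filter (fun p => Q p.1 p.2)).card ≤ D) :
    N ^ k * ∑ σ ∈ matchings (2*N),
        ((univ : Finset (Fin k → Fin (2*N) × Fin (2*N))).filter
          (fun h => (∀ i, σ (h i).1 = (h i).2) ∧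
            ((∀ i, Q (h i).1 (h i).2) ∧ Function.Injective (pt h)))).card
      ≤ D ^ k * (matchings (2*N)).card := by
  classical
  set H := ((univ : Finset (Fin k → Fin (2*N) × Fin (2*N))).filter
      (fun h => (∀ i, Q (h i).1 (h i).2) ∧ Function.Injective (pt h))) with hH
  have swap1 : ∑ σ ∈ matchings (2*N),
        ((univ : Finset (Fin k → Fin (2*N) × Fin (2*N))).filter
          (fun h => (∀ i, σ (h i).1 = (h i).2) ∧
            ((∀ i, Q (h i).1 (h i).2) ∧ Function.Injective (pt h)))).card
      = ∑ h ∈ (univ : Finset (Fin k → Fin (2*N) × Fin (2*N))),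
          ((matchings (2*N)).filter
            (fun σ => (∀ i, σ (h i).1 = (h i).2) ∧
              ((∀ i, Q (h i).1 (h i).2) ∧ Function.Injective (pt h)))).card := by
    simp only [card_filter]
    rw [Finset.sum_comm]
  have swap2 : ∑ h ∈ (univ : Finset (Fin k → Fin (2*N) × Fin (2*N))),
          ((matchings (2*N)).filter
            (fun σ => (∀ i, σ (h i).1 = (h i).2) ∧
              ((∀ i, Q (h i).1 (h i).2) ∧ Function.Injective (pt h)))).card
      = ∑ h ∈ H, ((matchings (2*N)).filter (fun σ => ∀ i, σ (h i).1 = (h i).2)).card := by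
    rw [← Finset.sum_subset (subset_univ H)]
    · apply Finset.sum_congr rfl
      intro h hh
      rw [hH, mem_filter] at hh
      congr 1
      apply filter_congr
      intro σ _
      constructor
      · exact fun hc => hc.1
      · exact fun hc => ⟨hc, hh.2⟩
    · intro h _ hh
      rw [Finset.card_eq_zero, Finset.filter_eq_empty_iff]
      intro σ _ hc
      exact hh (by rw [hH, mem_filter]; exact ⟨mem_univ _, hc.2⟩)
  have hHcard : H.card ≤ D ^ k := by
    have hsub : H ⊆ Fintype.piFinset
        (fun _ : Fin k => (univ : Finset (Fin (2*N) × Fin (2*N))).filter (fun p => Q p.1 p.2)) := by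
      intro h hh
      rw [hH, mem_filter] at hh
      rw [Fintype.mem_piFinset]
      intro i
      rw [mem_filter]
      exact ⟨mem_univ _, hh.2.1 i⟩
    calc H.card ≤ _ := card_le_card hsub
      _ = ∏ _i : Fin k,
          ((univ : Finset (Fin (2*N) × Fin (2*N))).filter (fun p => Q p.1 p.2)).card :=
            Fintype.card_piFinset _
      _ ≤ ∏ _i : Fin k, D := Finset.prod_le_prod' (fun _ _ => hD)
      _ = D ^ k := by simp
  calc N ^ k * ∑ σ ∈ matchings (2*N), _ 
      = ∑ h ∈ H, N ^ k *
          ((matchings (2*N)).filter (fun σ => ∀ i, σ (h i).1 = (h i).2)).card := by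
        rw [swap1, swap2, Finset.mul_sum]
    _ ≤ ∑ h ∈ H, (matchings (2*N)).card := by
        apply Finset.sum_le_sum
        intro h hh
        rw [hH, mem_filter] at hh
        exact key k h hh.2.2 hkN
    _ = H.card * (matchings (2*N)).card := by rw [Finset.sum_const, smul_eq_mul]
    _ ≤ D ^ k * (matchings (2*N)).card := Nat.mul_le_mul_right _ hHcard

lemma final_cast {S Mc N C : ℕ} (k : ℕ) (hnat : N ^ k * S ≤ C ^ k * Mc)
    (hMc : 0 < Mc) (hN : 0 < N) :
    (S : ℝ) / (Mc : ℝ) ≤ ((C : ℝ) / (N : ℝ)) ^ k := by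
  have hMc' : (0:ℝ) < Mc := by exact_mod_cast hMc
  have hN' : (0:ℝ) < (N:ℝ) ^ k := by positivity
  rw [div_pow, div_le_div_iff₀ hMc' hN']
  have : (N:ℝ) ^ k * S ≤ (C:ℝ) ^ k * Mc := by exact_mod_cast hnat
  linarith

/-- Equation (5.3)/(6.2): factorial moment bounds `E[X_u^{(k)}] ≤ (d_u²/N)^k` and
`E[X_{vw}^{(k)}] ≤ (d_v d_w/N)^k` in the configuration model. -/
theorem stmt_6 (n N k : ℕ) (d : Fin n → ℕ) (vm : Fin (2 * N) → Fin n)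
    (hvm : ∀ i, (Finset.univ.filter (fun x => vm x = i)).card = d i)
    (hk : 1 ≤ k) (hkN : 4 * k ≤ 2 * N) :
    (∀ u : Fin n,
      (∑ σ ∈ matchings (2 * N), (((numLoops vm σ u).descFactorial k : ℕ) : ℝ)) /
          ((matchings (2 * N)).card : ℝ)
        ≤ ((d u : ℝ) ^ 2 / (N : ℝ)) ^ k) ∧
    (∀ v w : Fin n, v ≠ w →
      (∑ σ ∈ matchings (2 * N), (((numEdges vm σ v w).descFactorial k : ℕ) : ℝ)) /
          ((matchings (2 * N)).card : ℝ)
        ≤ ((d v : ℝ) * (d w : ℝ) / (N : ℝ)) ^ k) := by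
  classical
  have hN : 0 < N := by omega
  have h2k : 2 * k ≤ N := by omega
  have hMc : 0 < (matchings (2 * N)).card := Finset.card_pos.mpr (matchings_nonempty N)
  have hDcard : ∀ a b : Fin n,
      ((univ : Finset (Fin (2*N) × Fin (2*N))).filter
        (fun p => vm p.1 = a ∧ vm p.2 = b)).card = d a * d b := by
    intro a b
    have h1 : ((univ : Finset (Fin (2*N) × Fin (2*N))).filter
        (fun p => vm p.1 = a ∧ vm p.2 = b))
        = (univ.filter (fun x => vm x = a)) ×ˢ (univ.filter (fun x => vm x = b)) := by
      ext pr
      simp only [mem_filter, mem_univ, true_and, Finset.mem_product]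
    rw [h1, card_product, hvm, hvm]
  constructor
  · intro u
    have hnat : N ^ k * ∑ σ ∈ matchings (2 * N), (numLoops vm σ u).descFactorial k
        ≤ (d u * d u) ^ k * (matchings (2 * N)).card := by
      calc N ^ k * ∑ σ ∈ matchings (2 * N), (numLoops vm σ u).descFactorial k
          ≤ N ^ k * ∑ σ ∈ matchings (2 * N),
            ((univ : Finset (Fin k → Fin (2*N) × Fin (2*N))).filter
              (fun h => (∀ i, σ (h i).1 = (h i).2) ∧
                ((∀ i, vm (h i).1 = u ∧ vm (h i).2 = u) ∧ Function.Injective (pt h)))).card := by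
            apply Nat.mul_le_mul_left
            apply Finset.sum_le_sum
            intro σ hσ
            exact loops_le vm u k hσ
        _ ≤ (d u * d u) ^ k * (matchings (2 * N)).card :=
            assembly k (fun x y => vm x = u ∧ vm y = u) h2k (d u * d u) (le_of_eq (hDcard u u))
    have := final_cast (S := ∑ σ ∈ matchings (2 * N), (numLoops vm σ u).descFactorial k)
      (C := d u * d u) k hnat hMc hN
    calc (∑ σ ∈ matchings (2 * N), (((numLoops vm σ u).descFactorial k : ℕ) : ℝ)) /
          ((matchings (2 * N)).card : ℝ)
        = ((∑ σ ∈ matchings (2 * N), (numLoops vm σ u).descFactorial k : ℕ) : ℝ) /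
          ((matchings (2 * N)).card : ℝ) := by rw [Nat.cast_sum]
      _ ≤ (((d u * d u : ℕ) : ℝ) / (N : ℝ)) ^ k := this
      _ = ((d u : ℝ) ^ 2 / (N : ℝ)) ^ k := by push_cast; ring_nf
  · intro v w hvw
    have hnat : N ^ k * ∑ σ ∈ matchings (2 * N), (numEdges vm σ v w).descFactorial k
        ≤ (d v * d w) ^ k * (matchings (2 * N)).card := by
      calc N ^ k * ∑ σ ∈ matchings (2 * N), (numEdges vm σ v w).descFactorial k
          ≤ N ^ k * ∑ σ ∈ matchings (2 * N),
            ((univ : Finset (Fin k → Fin (2*N) × Fin (2*N))).filter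
              (fun h => (∀ i, σ (h i).1 = (h i).2) ∧
                ((∀ i, vm (h i).1 = v ∧ vm (h i).2 = w) ∧ Function.Injective (pt h)))).card := by
            apply Nat.mul_le_mul_left
            apply Finset.sum_le_sum
            intro σ hσ
            exact edges_le vm v w hvw k hσ
        _ ≤ (d v * d w) ^ k * (matchings (2 * N)).card :=
            assembly k (fun x y => vm x = v ∧ vm y = w) h2k (d v * d w) (le_of_eq (hDcard v w))
    have := final_cast (S := ∑ σ ∈ matchings (2 * N), (numEdges vm σ v w).descFactorial k)
      (C := d v * d w) k hnat hMc hN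
    calc (∑ σ ∈ matchings (2 * N), (((numEdges vm σ v w).descFactorial k : ℕ) : ℝ)) /
          ((matchings (2 * N)).card : ℝ)
        = ((∑ σ ∈ matchings (2 * N), (numEdges vm σ v w).descFactorial k : ℕ) : ℝ) /
          ((matchings (2 * N)).card : ℝ) := by rw [Nat.cast_sum]
      _ ≤ (((d v * d w : ℕ) : ℝ) / (N : ℝ)) ^ k := this
      _ = ((d v : ℝ) * (d w : ℝ) / (N : ℝ)) ^ k := by push_cast; ring_nf
end

section
/- In the configuration model with $2N$ half-edges and degree sequence $(d_1,\dots,d_n)$, for distinct vertices $u_1,\dots,u_l$ and distinct vertex pairs $e_1 = \{v_1,w_1\}, \dots, e_m = \{v_m,w_m\}$, with $t = \sum_i r_i + \sum_j s_j$ and $2N \ge 2t$, one has $\mathbb{E}\left[\prod_{i=1}^l X_{u_i}^{(r_i)} \prod_{j=1}^m X_{e_j}^{(s_j)}\right] \le \prod_{i=1}^l \frac{d_{u_i}^{2 r_i}}{(2N - 2t + 1)^{r_i}} \prod_{j=1}^m \frac{(d_{v_j} d_{w_j})^{s_j}}{(2N - 2t + 1)^{s_j}}$, where $X_u$ is the number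 of loops at $u$ and $X_e$ the number of edges between $v_j$ and $w_j$. -/
open Finset

def pcoords {M : ℕ} (ps : List (Fin M × Fin M)) : List (Fin M) :=
  ps.flatMap (fun p => [p.1, p.2])

lemma pcoords_cons {M : ℕ} (p : Fin M × Fin M) (ps : List (Fin M × Fin M)) :
    pcoords (p :: ps) = p.1 :: p.2 :: pcoords ps := by
  simp [pcoords]

lemma mem_pcoords {M : ℕ} {x : Fin M} {ps : List (Fin M × Fin M)} :
    x ∈ pcoords ps ↔ ∃ p ∈ ps, x = p.1 ∨ x = p.2 := by
  simp [pcoords, List.mem_flatMap, eq_comm, or_comm]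

lemma pcoords_length {M : ℕ} (ps : List (Fin M × Fin M)) :
    (pcoords ps).length = 2 * ps.length := by
  induction ps with
  | nil => simp [pcoords]
  | cons p ps ih => rw [pcoords_cons]; simp [ih]; omega

def extM (M : ℕ) (ps : List (Fin M × Fin M)) : Finset (Equiv.Perm (Fin M)) :=
  (matchings M).filter (fun σ => ∀ p ∈ ps, σ p.1 = p.2)

lemma extM_nil (M : ℕ) : extM M [] = matchings M := by
  simp [extM]

lemma extM_cons (M : ℕ) (p : Fin M × Fin M) (ps : List (Fin M × Fin M)) :
    extM M (p :: ps) = (extM M ps).filter (fun σ => σ p.1 = p.2) := by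
  ext σ
  simp only [extM, mem_filter, List.mem_cons]
  constructor
  · rintro ⟨hm, h⟩
    exact ⟨⟨hm, fun q hq => h q (Or.inr hq)⟩, h p (Or.inl rfl)⟩
  · rintro ⟨⟨hm, h⟩, hp⟩
    refine ⟨hm, ?_⟩
    rintro q (rfl | hq)
    · exact hp
    · exact h q hq

lemma extM_step {M : ℕ} (p : Fin M × Fin M) (ps : List (Fin M × Fin M))
    (h : (pcoords (p :: ps)).Nodup) :
    (extM M (p :: ps)).card * (M - (2 * ps.length + 1)) ≤ (extM M ps).card := by
  rw [pcoords_cons] at h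
  simp only [List.nodup_cons] at h
  obtain ⟨h1, h2, hnd⟩ := h
  have hp12 : p.1 ≠ p.2 := by simp at h1; tauto
  have hp1 : p.1 ∉ pcoords ps := by simp at h1; tauto
  have hp2 : p.2 ∉ pcoords ps := h2
  classical
  set S : Finset (Fin M) := (pcoords ps).toFinset ∪ {p.1} with hS
  have hcardS : S.card ≤ 2 * ps.length + 1 := by
    calc S.card ≤ (pcoords ps).toFinset.card + ({p.1} : Finset (Fin M)).card :=
          Finset.card_union_le _ _
      _ ≤ (pcoords ps).length + 1 := by
          simp [List.toFinset_card_le]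
      _ = 2 * ps.length + 1 := by rw [pcoords_length]
  -- fiberwise decomposition
  have hfib : (extM M ps).card
      = ∑ z : Fin M, ((extM M ps).filter (fun σ => σ p.1 = z)).card :=
    Finset.card_eq_sum_card_fiberwise (fun σ _ => Finset.mem_univ _)
  -- each fiber with z outside S has card equal to (extM M (p::ps)).card
  have hfibeq : ∀ z ∈ (Finset.univ \ S), ((extM M ps).filter (fun σ => σ p.1 = z)).card
      = (extM M (p :: ps)).card := by
    intro z hz
    rw [Finset.mem_sdiff] at hz
    have hzS := hz.2
    have hz1 : z ≠ p.1 := by intro e; exact hzS (by simp [hS, e])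
    have hzps : z ∉ pcoords ps := by intro e; exact hzS (by simp [hS, e])
    rw [extM_cons]
    set τ := Equiv.swap z p.2 with hτ
    have hτps : ∀ x ∈ pcoords ps, τ x = x := by
      intro x hx
      apply Equiv.swap_apply_of_ne_of_ne
      · intro e; exact hzps (e ▸ hx)
      · intro e; exact hp2 (e ▸ hx)
    have hτp1 : τ p.1 = p.1 := Equiv.swap_apply_of_ne_of_ne (Ne.symm hz1) hp12
    have key : ∀ σ ∈ extM M ps, τ * σ * τ ∈ extM M ps := by
      intro σ hσ
      simp only [extM, matchings, mem_filter, mem_univ, true_and] at hσ ⊢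
      obtain ⟨⟨hfp, hinv⟩, hps⟩ := hσ
      refine ⟨⟨?_, ?_⟩, ?_⟩
      · intro x hx
        simp only [Equiv.Perm.mul_apply] at hx
        have := congrArg τ hx
        rw [Equiv.swap_apply_self] at this
        exact hfp (τ x) this
      · intro x
        simp only [Equiv.Perm.mul_apply, hτ, Equiv.swap_apply_self, hinv]
      · intro q hq
        have hq1 : τ q.1 = q.1 := hτps q.1 (mem_pcoords.mpr ⟨q, hq, Or.inl rfl⟩)
        have hq2 : τ q.2 = q.2 := hτps q.2 (mem_pcoords.mpr ⟨q, hq, Or.inr rfl⟩)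
        simp only [Equiv.Perm.mul_apply, hq1, hps q hq, hq2]
    apply Finset.card_nbij' (fun σ => τ * σ * τ) (fun σ => τ * σ * τ)
    · intro σ hσ
      rw [Finset.mem_coe, Finset.mem_filter] at hσ ⊢
      refine ⟨key σ hσ.1, ?_⟩
      simp only [Equiv.Perm.mul_apply]
      rw [hτp1, hσ.2, hτ, Equiv.swap_apply_left]
    · intro σ hσ
      rw [Finset.mem_coe, Finset.mem_filter] at hσ ⊢
      refine ⟨key σ hσ.1, ?_⟩
      simp only [Equiv.Perm.mul_apply]
      rw [hτp1, hσ.2, hτ, Equiv.swap_apply_right]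
    · intro σ _
      ext x
      simp only [Equiv.Perm.mul_apply, hτ, Equiv.swap_apply_self]
    · intro σ _
      ext x
      simp only [Equiv.Perm.mul_apply, hτ, Equiv.swap_apply_self]
  calc (extM M (p :: ps)).card * (M - (2 * ps.length + 1))
      ≤ (extM M (p :: ps)).card * (Finset.univ \ S).card := by
        apply Nat.mul_le_mul_left
        rw [Finset.card_sdiff_of_subset (Finset.subset_univ S)]
        simp only [Finset.card_univ, Fintype.card_fin]
        omega
    _ = ∑ z ∈ (Finset.univ \ S), ((extM M ps).filter (fun σ => σ p.1 = z)).card := by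
        rw [Finset.sum_congr rfl hfibeq, Finset.sum_const, smul_eq_mul, mul_comm]
    _ ≤ ∑ z : Fin M, ((extM M ps).filter (fun σ => σ p.1 = z)).card := by
        apply Finset.sum_le_sum_of_subset (Finset.sdiff_subset)
    _ = (extM M ps).card := hfib.symm

lemma extM_le_aux {M : ℕ} : ∀ (ps qs : List (Fin M × Fin M)),
    (pcoords (ps ++ qs)).Nodup →
    (extM M (ps ++ qs)).card * (M - 2 * (ps.length + qs.length) + 1) ^ ps.length
      ≤ (extM M qs).card := by
  intro ps
  induction ps with
  | nil => intro qs h; simpa using le_refl _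
  | cons p ps ih =>
    intro qs h
    have hM : 2 * ((ps ++ qs).length + 1) ≤ M := by
      have := h.length_le_card
      rw [pcoords_length] at this
      simp only [List.length_cons, List.length_append, Fintype.card_fin] at this ⊢
      omega
    have hnd : (pcoords (ps ++ qs)).Nodup := by
      rw [show (p :: ps) ++ qs = p :: (ps ++ qs) from rfl, pcoords_cons] at h
      exact h.of_cons.of_cons
    have hstep := extM_step p (ps ++ qs) (by exact h)
    set L := M - 2 * ((p :: ps).length + qs.length) + 1 with hL
    have hLeq : L = M - (2 * (ps ++ qs).length + 1) := by
      simp only [hL, List.length_cons, List.length_append] at *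
      omega
    calc (extM M ((p :: ps) ++ qs)).card * L ^ (p :: ps).length
        = ((extM M (p :: (ps ++ qs))).card * L) * L ^ ps.length := by
          simp [pow_succ]; ring
      _ ≤ (extM M (ps ++ qs)).card * L ^ ps.length := by
          apply Nat.mul_le_mul_right
          rw [hLeq]
          exact hstep
      _ ≤ (extM M (ps ++ qs)).card * (M - 2 * (ps.length + qs.length) + 1) ^ ps.length := by
          apply Nat.mul_le_mul_left
          apply Nat.pow_le_pow_left
          simp only [hL, List.length_cons]
          omega
      _ ≤ (extM M qs).card := ih qs hnd

lemma extM_le {M : ℕ} (ps : List (Fin M × Fin M)) (h : (pcoords ps).Nodup) :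
    (extM M ps).card * (M - 2 * ps.length + 1) ^ ps.length ≤ (matchings M).card := by
  have := extM_le_aux ps [] (by simpa using h)
  simpa [extM_nil] using this

lemma pcoords_map_nodup {M : ℕ} {ι : Type*} [DecidableEq ι] (P : ι → Fin M × Fin M)
    (hP1 : ∀ a b, (P a).1 ≠ (P b).2)
    (hP2 : ∀ a b, a ≠ b → (P a).1 ≠ (P b).1)
    (hP3 : ∀ a b, a ≠ b → (P a).2 ≠ (P b).2) :
    ∀ (ls : List ι), ls.Nodup → (pcoords (ls.map P)).Nodup := by
  intro ls
  induction ls with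
  | nil => simp [pcoords]
  | cons a ls ih =>
    intro h
    rw [List.nodup_cons] at h
    rw [List.map_cons, pcoords_cons, List.nodup_cons, List.nodup_cons]
    refine ⟨?_, ?_, ih h.2⟩
    · rw [List.mem_cons]
      rintro (e | e)
      · exact hP1 a a e
      · rw [mem_pcoords] at e
        obtain ⟨q, hq, hq2⟩ := e
        rw [List.mem_map] at hq
        obtain ⟨b, hb, rfl⟩ := hq
        have hab : a ≠ b := fun e => h.1 (e ▸ hb)
        rcases hq2 with e | e
        · exact hP2 a b hab e
        · exact hP1 a b e
    · rw [mem_pcoords]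
      rintro ⟨q, hq, hq2⟩
      rw [List.mem_map] at hq
      obtain ⟨b, hb, rfl⟩ := hq
      have hab : a ≠ b := fun e => h.1 (e ▸ hb)
      rcases hq2 with e | e
      · exact hP1 b a e.symm
      · exact hP3 a b hab e

lemma matchings_pairs_le (M : ℕ) {ι : Type*} [Fintype ι] [DecidableEq ι]
    (P : ι → Fin M × Fin M)
    (hP1 : ∀ a b, (P a).1 ≠ (P b).2)
    (hP2 : ∀ a b, a ≠ b → (P a).1 ≠ (P b).1)
    (hP3 : ∀ a b, a ≠ b → (P a).2 ≠ (P b).2) :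
    ((matchings M).filter (fun σ => ∀ a, σ (P a).1 = (P a).2)).card
      * (M - 2 * Fintype.card ι + 1) ^ Fintype.card ι ≤ (matchings M).card := by
  classical
  set ls := (Finset.univ : Finset ι).toList with hls
  have hlen : (ls.map P).length = Fintype.card ι := by
    simp [hls]
  have hnd : (pcoords (ls.map P)).Nodup :=
    pcoords_map_nodup P hP1 hP2 hP3 ls (Finset.nodup_toList _)
  have hfe : (matchings M).filter (fun σ => ∀ a, σ (P a).1 = (P a).2)
      = extM M (ls.map P) := by
    ext σ
    simp only [extM, mem_filter, and_congr_right_iff]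
    intro _
    rw [List.forall_mem_map]
    constructor
    · intro h b _; exact h b
    · intro h b; exact h b (by simp [hls])
  rw [hfe, ← hlen]
  exact extM_le (ls.map P) hnd


lemma numLoops_eq_card {M n : ℕ} (vm : Fin M → Fin n) (σ : Equiv.Perm (Fin M))
    (hfp : ∀ x, σ x ≠ x) (hinv : ∀ x, σ (σ x) = x) (u : Fin n) :
    numLoops vm σ u
      = (Finset.univ.filter (fun x => vm x = u ∧ vm (σ x) = u ∧ x < σ x)).card := by
  classical
  set S := Finset.univ.filter (fun x : Fin M => vm x = u ∧ vm (σ x) = u) with hSdef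
  set L := Finset.univ.filter (fun x : Fin M => vm x = u ∧ vm (σ x) = u ∧ x < σ x) with hLdef
  set L' := Finset.univ.filter (fun x : Fin M => (vm x = u ∧ vm (σ x) = u) ∧ ¬ x < σ x) with hL'def
  have hLS : L = S.filter (fun x => x < σ x) := by
    rw [hSdef, Finset.filter_filter]
    apply Finset.filter_congr
    intro x _
    tauto
  have hL'S : L' = S.filter (fun x => ¬ x < σ x) := by
    rw [hSdef, Finset.filter_filter]
  have hsplit : L.card + L'.card = S.card := by
    rw [hLS, hL'S]
    exact Finset.card_filter_add_card_filter_not _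
  have hcongr : L'.card = L.card := by
    apply Finset.card_nbij' (fun x => σ x) (fun x => σ x)
    · intro x hx
      simp only [hL'def, hLdef, Finset.mem_coe, Finset.mem_filter, Finset.mem_univ, true_and] at hx ⊢
      obtain ⟨⟨h1, h2⟩, h3⟩ := hx
      have hlt : σ x < x := lt_of_le_of_ne (not_lt.mp h3) (hfp x)
      exact ⟨h2, by rw [hinv]; exact h1, by rw [hinv]; exact hlt⟩
    · intro x hx
      simp only [hL'def, hLdef, Finset.mem_coe, Finset.mem_filter, Finset.mem_univ, true_and] at hx ⊢
      obtain ⟨h1, h2, h3⟩ := hx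
      refine ⟨⟨h2, by rw [hinv]; exact h1⟩, ?_⟩
      rw [hinv]
      exact not_lt.mpr (le_of_lt h3)
    · intro x _; exact hinv x
    · intro x _; exact hinv x
  have : S.card = 2 * L.card := by omega
  rw [numLoops, ← hSdef, this]
  omega

lemma matchings_card_pos (N : ℕ) : 0 < (matchings (2 * N)).card := by
  rw [Finset.card_pos]
  classical
  set e : Fin (2 * N) ≃ (Fin N ⊕ Fin N) := (finCongr (two_mul N)).trans finSumFinEquiv.symm
  refine ⟨e.trans ((Equiv.sumComm (Fin N) (Fin N)).trans e.symm), ?_⟩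
  simp only [matchings, Finset.mem_filter, Finset.mem_univ, true_and]
  constructor
  · intro x hx
    simp only [Equiv.trans_apply] at hx
    have := congrArg e hx
    rw [Equiv.apply_symm_apply] at this
    rcases h : e x with a | a <;> rw [h] at this <;> simp [Equiv.sumComm] at this
  · intro x
    simp only [Equiv.trans_apply, Equiv.apply_symm_apply]
    rcases h : e x with a | a <;>
      simp [Equiv.sumComm, Equiv.symm_apply_eq, h]

abbrev Idx (l m : ℕ) (r : Fin l → ℕ) (s : Fin m → ℕ) : Type :=
  (Σ i : Fin l, Fin (r i)) ⊕ (Σ j : Fin m, Fin (s j))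

lemma claim1 {M n l m : ℕ} (vm : Fin M → Fin n)
    (u : Fin l → Fin n) (hu : Function.Injective u)
    (v w : Fin m → Fin n) (hvw : ∀ j, v j ≠ w j)
    (hdist : ∀ j j', j ≠ j' → ({v j, w j} : Finset (Fin n)) ≠ {v j', w j'})
    (r : Fin l → ℕ) (s : Fin m → ℕ)
    (σ : Equiv.Perm (Fin M)) (hfp : ∀ x, σ x ≠ x) (hinv : ∀ x, σ (σ x) = x) :
    ((∏ i, (numLoops vm σ (u i)).descFactorial (r i)) *
      ∏ j, (numEdges vm σ (v j) (w j)).descFactorial (s j))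
      ≤ (Finset.univ.filter (fun F : Idx l m r s → Fin M =>
          (∀ p : Σ i : Fin l, Fin (r i),
              vm (F (Sum.inl p)) = u p.1 ∧ vm (σ (F (Sum.inl p))) = u p.1 ∧
              F (Sum.inl p) < σ (F (Sum.inl p))) ∧
          (∀ q : Σ j : Fin m, Fin (s j),
              vm (F (Sum.inr q)) = v q.1 ∧ vm (σ (F (Sum.inr q))) = w q.1) ∧
          (∀ a b, a ≠ b → F a ≠ F b ∧ F a ≠ σ (F b)))).card := by
  classical
  set Lset : Fin l → Finset (Fin M) :=
    fun i => Finset.univ.filter (fun x => vm x = u i ∧ vm (σ x) = u i ∧ x < σ x) with hLset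
  set Eset : Fin m → Finset (Fin M) :=
    fun j => Finset.univ.filter (fun x => vm x = v j ∧ vm (σ x) = w j) with hEset
  have hLmem : ∀ i (x : Fin M), x ∈ Lset i ↔ vm x = u i ∧ vm (σ x) = u i ∧ x < σ x := by
    intro i x; simp [hLset]
  have hEmem : ∀ j (x : Fin M), x ∈ Eset j ↔ vm x = v j ∧ vm (σ x) = w j := by
    intro j x; simp [hEset]
  have hcardT : Fintype.card ((∀ i, Fin (r i) ↪ (Lset i)) × (∀ j, Fin (s j) ↪ (Eset j)))
      = ((∏ i, (numLoops vm σ (u i)).descFactorial (r i)) *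
        ∏ j, (numEdges vm σ (v j) (w j)).descFactorial (s j)) := by
    rw [Fintype.card_prod, Fintype.card_pi, Fintype.card_pi]
    congr 1
    · apply Finset.prod_congr rfl
      intro i _
      rw [Fintype.card_embedding_eq, Fintype.card_coe, Fintype.card_fin,
        numLoops_eq_card vm σ hfp hinv (u i)]
    · apply Finset.prod_congr rfl
      intro j _
      rw [Fintype.card_embedding_eq, Fintype.card_coe, Fintype.card_fin]
      rfl
  rw [← hcardT, ← Finset.card_univ]
  set Φ : ((∀ i, Fin (r i) ↪ (Lset i)) × (∀ j, Fin (s j) ↪ (Eset j))) → (Idx l m r s → Fin M) :=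
    fun t => Sum.elim (fun p => (t.1 p.1 p.2 : Fin M)) (fun q => (t.2 q.1 q.2 : Fin M)) with hΦ
  apply Finset.card_le_card_of_injOn Φ
  · intro t _
    rw [Finset.mem_coe, Finset.mem_filter]
    refine ⟨Finset.mem_univ _, ?_, ?_, ?_⟩
    · intro p
      have := (hLmem p.1 _).mp (t.1 p.1 p.2).2
      simpa [hΦ] using this
    · intro q
      have := (hEmem q.1 _).mp (t.2 q.1 q.2).2
      simpa [hΦ] using this
    · -- distinctness
      have memL : ∀ p : Σ i : Fin l, Fin (r i),
          vm (Φ t (Sum.inl p)) = u p.1 ∧ vm (σ (Φ t (Sum.inl p))) = u p.1 ∧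
            Φ t (Sum.inl p) < σ (Φ t (Sum.inl p)) := by
        intro p
        have := (hLmem p.1 _).mp (t.1 p.1 p.2).2
        simpa [hΦ] using this
      have memE : ∀ q : Σ j : Fin m, Fin (s j),
          vm (Φ t (Sum.inr q)) = v q.1 ∧ vm (σ (Φ t (Sum.inr q))) = w q.1 := by
        intro q
        have := (hEmem q.1 _).mp (t.2 q.1 q.2).2
        simpa [hΦ] using this
      rintro (p | q) (p' | q') hab
      · -- loop vs loop
        obtain ⟨hx1, hx2, hx3⟩ := memL p
        obtain ⟨hy1, hy2, hy3⟩ := memL p'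
        constructor
        · intro e
          rcases p with ⟨i, k⟩; rcases p' with ⟨i', k'⟩
          by_cases hii : i = i'
          · subst hii
            have hkk : k ≠ k' := fun ekk => hab (by rw [ekk])
            simp only [hΦ, Sum.elim_inl] at e
            exact hkk (by
              have := (t.1 i).injective (Subtype.ext e)
              exact this)
          · exact hii (hu (hx1 ▸ hy1 ▸ congrArg vm e))
        · intro e
          -- Φ t (inl p) = σ (Φ t (inl p'))
          rw [e, hinv] at hx3
          exact absurd hx3 (not_lt.mpr (le_of_lt hy3))
      · -- loop vs edge
        obtain ⟨hx1, hx2, _⟩ := memL p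
        obtain ⟨hy1, hy2⟩ := memE q'
        constructor
        · intro e
          apply hvw q'.1
          rw [← hy1, ← e, hx1]
          rw [← hy2, ← e, hx2]
        · intro e
          apply hvw q'.1
          have e2 : σ (Φ t (Sum.inl p)) = Φ t (Sum.inr q') := by rw [e, hinv]
          rw [← hy1, ← e2, hx2, ← hy2, ← e, hx1]
      · -- edge vs loop
        obtain ⟨hx1, hx2⟩ := memE q
        obtain ⟨hy1, hy2, _⟩ := memL p'
        constructor
        · intro e
          apply hvw q.1
          rw [← hx1, e, hy1, ← hx2, e, hy2]
        · intro e
          apply hvw q.1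
          have e2 : σ (Φ t (Sum.inr q)) = Φ t (Sum.inl p') := by rw [e, hinv]
          rw [← hx1, e, hy2, ← hx2, e2, hy1]
      · -- edge vs edge
        obtain ⟨hx1, hx2⟩ := memE q
        obtain ⟨hy1, hy2⟩ := memE q'
        constructor
        · intro e
          rcases q with ⟨j, k⟩; rcases q' with ⟨j', k'⟩
          by_cases hjj : j = j'
          · subst hjj
            have hkk : k ≠ k' := fun ekk => hab (by rw [ekk])
            simp only [hΦ, Sum.elim_inr] at e
            exact hkk ((t.2 j).injective (Subtype.ext e))
          · apply hdist j j' hjj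
            have ev : v j = v j' := by rw [← hx1, e, hy1]
            have ew : w j = w j' := by
              rw [← hx2, e, hy2]
            rw [ev, ew]
        · intro e
          rcases q with ⟨j, k⟩; rcases q' with ⟨j', k'⟩
          by_cases hjj : j = j'
          · subst hjj
            apply hvw j
            rw [← hx1, e, hy2]
          · apply hdist j j' hjj
            have e2 : σ (Φ t (Sum.inr ⟨j, k⟩)) = Φ t (Sum.inr ⟨j', k'⟩) := by rw [e, hinv]
            have ev : v j = w j' := by rw [← hx1, e, hy2]
            have ew : w j = v j' := by rw [← hx2, e2, hy1]
            rw [ev, ew]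
            exact Finset.pair_comm _ _
  · intro t _ t' _ he
    have h1 : t.1 = t'.1 := by
      funext i
      apply DFunLike.ext
      intro k
      apply Subtype.ext
      exact congrFun he (Sum.inl ⟨i, k⟩)
    have h2 : t.2 = t'.2 := by
      funext j
      apply DFunLike.ext
      intro k
      apply Subtype.ext
      exact congrFun he (Sum.inr ⟨j, k⟩)
    exact Prod.ext h1 h2

open Classical in
noncomputable def Gset {M n : ℕ} {l m : ℕ} (vm : Fin M → Fin n) (u : Fin l → Fin n)
    (v w : Fin m → Fin n) (r : Fin l → ℕ) (s : Fin m → ℕ) :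
    Finset (Idx l m r s → Fin M × Fin M) :=
  Finset.univ.filter (fun P =>
    (∀ p : Σ i : Fin l, Fin (r i),
        vm (P (Sum.inl p)).1 = u p.1 ∧ vm (P (Sum.inl p)).2 = u p.1 ∧
        (P (Sum.inl p)).1 < (P (Sum.inl p)).2) ∧
    (∀ q : Σ j : Fin m, Fin (s j),
        vm (P (Sum.inr q)).1 = v q.1 ∧ vm (P (Sum.inr q)).2 = w q.1) ∧
    (∀ a b, (P a).1 ≠ (P b).2) ∧
    (∀ a b, a ≠ b → (P a).1 ≠ (P b).1) ∧
    (∀ a b, a ≠ b → (P a).2 ≠ (P b).2))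

lemma mem_Gset {M n : ℕ} {l m : ℕ} {vm : Fin M → Fin n} {u : Fin l → Fin n}
    {v w : Fin m → Fin n} {r : Fin l → ℕ} {s : Fin m → ℕ}
    {P : Idx l m r s → Fin M × Fin M} :
    P ∈ Gset vm u v w r s ↔
      ((∀ p : Σ i : Fin l, Fin (r i),
          vm (P (Sum.inl p)).1 = u p.1 ∧ vm (P (Sum.inl p)).2 = u p.1 ∧
          (P (Sum.inl p)).1 < (P (Sum.inl p)).2) ∧
      (∀ q : Σ j : Fin m, Fin (s j),
          vm (P (Sum.inr q)).1 = v q.1 ∧ vm (P (Sum.inr q)).2 = w q.1) ∧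
      (∀ a b, (P a).1 ≠ (P b).2) ∧
      (∀ a b, a ≠ b → (P a).1 ≠ (P b).1) ∧
      (∀ a b, a ≠ b → (P a).2 ≠ (P b).2)) := by
  simp only [Gset, Finset.mem_filter, Finset.mem_univ, true_and]

lemma claim2 {M n l m : ℕ} (vm : Fin M → Fin n)
    (u : Fin l → Fin n) (v w : Fin m → Fin n)
    (r : Fin l → ℕ) (s : Fin m → ℕ)
    (σ : Equiv.Perm (Fin M)) (hfp : ∀ x, σ x ≠ x) (hinv : ∀ x, σ (σ x) = x) :
    (Finset.univ.filter (fun F : Idx l m r s → Fin M =>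
        (∀ p : Σ i : Fin l, Fin (r i),
            vm (F (Sum.inl p)) = u p.1 ∧ vm (σ (F (Sum.inl p))) = u p.1 ∧
            F (Sum.inl p) < σ (F (Sum.inl p))) ∧
        (∀ q : Σ j : Fin m, Fin (s j),
            vm (F (Sum.inr q)) = v q.1 ∧ vm (σ (F (Sum.inr q))) = w q.1) ∧
        (∀ a b, a ≠ b → F a ≠ F b ∧ F a ≠ σ (F b)))).card
      = ((Gset vm u v w r s).filter (fun P => ∀ a, σ (P a).1 = (P a).2)).card := by
  classical
  apply Finset.card_nbij' (fun F a => (F a, σ (F a))) (fun P a => (P a).1)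
  · intro F hF
    rw [Finset.mem_coe, Finset.mem_filter] at hF
    obtain ⟨-, hc1, hc2, hc3⟩ := hF
    rw [Finset.mem_coe, Finset.mem_filter, mem_Gset]
    refine ⟨⟨?_, ?_, ?_, ?_, ?_⟩, fun a => rfl⟩
    · intro p; exact hc1 p
    · intro q; exact hc2 q
    · intro a b
      by_cases hab : a = b
      · subst hab; exact fun e => hfp (F a) e.symm
      · exact (hc3 a b hab).2
    · intro a b hab; exact (hc3 a b hab).1
    · intro a b hab
      intro e
      exact (hc3 a b hab).1 (σ.injective e)
  · intro P hP
    rw [Finset.mem_coe, Finset.mem_filter, mem_Gset] at hP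
    obtain ⟨⟨hc1, hc2, hc3, hc4, hc5⟩, hcompat⟩ := hP
    rw [Finset.mem_coe, Finset.mem_filter]
    refine ⟨Finset.mem_univ _, ?_, ?_, ?_⟩
    · intro p
      obtain ⟨h1, h2, h3⟩ := hc1 p
      rw [hcompat (Sum.inl p)]
      exact ⟨h1, h2, h3⟩
    · intro q
      obtain ⟨h1, h2⟩ := hc2 q
      rw [hcompat (Sum.inr q)]
      exact ⟨h1, h2⟩
    · intro a b hab
      refine ⟨hc4 a b hab, ?_⟩
      show (P a).1 ≠ σ (P b).1
      rw [hcompat b]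
      exact hc3 a b
  · intro F _
    funext a
    simp
  · intro P hP
    rw [Finset.mem_coe, Finset.mem_filter] at hP
    funext a
    exact Prod.ext rfl (hP.2 a)

lemma claim4 {M n l m : ℕ} (d : Fin n → ℕ) (vm : Fin M → Fin n)
    (hvm : ∀ i, (Finset.univ.filter (fun x => vm x = i)).card = d i)
    (u : Fin l → Fin n) (v w : Fin m → Fin n)
    (r : Fin l → ℕ) (s : Fin m → ℕ) :
    (Gset vm u v w r s).card
      ≤ (∏ i, (d (u i)) ^ (2 * r i)) * ∏ j, (d (v j) * d (w j)) ^ (s j) := by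
  classical
  set B : Idx l m r s → Finset (Fin M × Fin M) := Sum.elim
    (fun p => Finset.univ.filter (fun q : Fin M × Fin M => vm q.1 = u p.1 ∧ vm q.2 = u p.1))
    (fun q' => Finset.univ.filter (fun q : Fin M × Fin M => vm q.1 = v q'.1 ∧ vm q.2 = w q'.1))
    with hB
  have hsub : Gset vm u v w r s ⊆ Fintype.piFinset B := by
    intro P hP
    rw [mem_Gset] at hP
    obtain ⟨hc1, hc2, -⟩ := hP
    rw [Fintype.mem_piFinset]
    rintro (p | q)
    · obtain ⟨h1, h2, -⟩ := hc1 p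
      simp [hB, h1, h2]
    · obtain ⟨h1, h2⟩ := hc2 q
      simp [hB, h1, h2]
  have hcount : ∀ (a b : Fin n),
      (Finset.univ.filter (fun q : Fin M × Fin M => vm q.1 = a ∧ vm q.2 = b)).card
        = d a * d b := by
    intro a b
    have h1 : (Finset.univ.filter (fun q : Fin M × Fin M => vm q.1 = a ∧ vm q.2 = b))
        = (Finset.univ.filter (fun x => vm x = a)) ×ˢ (Finset.univ.filter (fun x => vm x = b)) := by
      ext q
      simp [Finset.mem_product]
    rw [h1, Finset.card_product, hvm, hvm]
  calc (Gset vm u v w r s).card ≤ (Fintype.piFinset B).card := Finset.card_le_card hsub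
    _ = ∏ a : Idx l m r s, (B a).card := Fintype.card_piFinset B
    _ = (∏ i, (d (u i)) ^ (2 * r i)) * ∏ j, (d (v j) * d (w j)) ^ (s j) := by
        rw [Fintype.prod_sum_type]
        congr 1
        · trans ∏ i, ∏ k : Fin (r i), (B (Sum.inl ⟨i, k⟩)).card
          · exact Finset.prod_sigma _ _ _
          apply Finset.prod_congr rfl
          intro i _
          have hthis : ∀ k : Fin (r i), (B (Sum.inl ⟨i, k⟩)).card = d (u i) * d (u i) := by
            intro k
            simp only [hB, Sum.elim_inl]
            exact hcount (u i) (u i)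
          rw [Finset.prod_congr rfl (fun k _ => hthis k), Finset.prod_const]
          simp [Finset.card_univ, two_mul, pow_add, mul_pow]
        · trans ∏ j, ∏ k : Fin (s j), (B (Sum.inr ⟨j, k⟩)).card
          · exact Finset.prod_sigma _ _ _
          apply Finset.prod_congr rfl
          intro j _
          have hthis : ∀ k : Fin (s j), (B (Sum.inr ⟨j, k⟩)).card = d (v j) * d (w j) := by
            intro k
            simp only [hB, Sum.elim_inr]
            exact hcount (v j) (w j)
          rw [Finset.prod_congr rfl (fun k _ => hthis k), Finset.prod_const]
          simp [Finset.card_univ]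

/-- Lemma 5.3 (proof bound): joint factorial moments of loop counts and multi-edge
counts in the configuration model are bounded by the product of the corresponding
individual bounds. -/
theorem stmt_14 (n N l m t : ℕ) (d : Fin n → ℕ) (vm : Fin (2 * N) → Fin n)
    (hvm : ∀ i, (Finset.univ.filter (fun x => vm x = i)).card = d i)
    (u : Fin l → Fin n) (hu : Function.Injective u)
    (v w : Fin m → Fin n) (hvw : ∀ j, v j ≠ w j)
    (hdist : ∀ j j', j ≠ j' → ({v j, w j} : Finset (Fin n)) ≠ {v j', w j'})
    (r : Fin l → ℕ) (s : Fin m → ℕ)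
    (ht : t = ∑ i, r i + ∑ j, s j) (htN : 2 * t ≤ 2 * N) :
    (∑ σ ∈ matchings (2 * N),
        (((∏ i, (numLoops vm σ (u i)).descFactorial (r i)) *
          ∏ j, (numEdges vm σ (v j) (w j)).descFactorial (s j) : ℕ) : ℝ)) /
        ((matchings (2 * N)).card : ℝ)
      ≤ (∏ i, (d (u i) : ℝ) ^ (2 * r i) / (2 * (N : ℝ) - 2 * (t : ℝ) + 1) ^ (r i)) *
          ∏ j, ((d (v j) : ℝ) * (d (w j) : ℝ)) ^ (s j) /
            (2 * (N : ℝ) - 2 * (t : ℝ) + 1) ^ (s j) := by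
  classical
  have hfact : ∀ σ ∈ matchings (2 * N), (∀ x, σ x ≠ x) ∧ ∀ x, σ (σ x) = x := by
    intro σ hσ
    simpa [matchings] using hσ
  set C := (matchings (2 * N)).card with hC
  have hCpos : 0 < C := matchings_card_pos N
  set K := 2 * N - 2 * t + 1 with hKdef
  have hKpos : 0 < K := by omega
  have hcardIdx : Fintype.card (Idx l m r s) = t := by
    rw [ht]
    simp [Idx]
  set D1 : ℕ := ∏ i, (d (u i)) ^ (2 * r i) with hD1
  set D2 : ℕ := ∏ j, (d (v j) * d (w j)) ^ (s j) with hD2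
  have step1 : (∑ σ ∈ matchings (2 * N), ((∏ i, (numLoops vm σ (u i)).descFactorial (r i)) *
          ∏ j, (numEdges vm σ (v j) (w j)).descFactorial (s j)))
      ≤ ∑ σ ∈ matchings (2 * N),
          ((Gset vm u v w r s).filter (fun P => ∀ a, σ (P a).1 = (P a).2)).card := by
    apply Finset.sum_le_sum
    intro σ hσ
    obtain ⟨hfp, hinv⟩ := hfact σ hσ
    calc ((∏ i, (numLoops vm σ (u i)).descFactorial (r i)) *
          ∏ j, (numEdges vm σ (v j) (w j)).descFactorial (s j))
        ≤ _ := claim1 vm u hu v w hvw hdist r s σ hfp hinv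
      _ = _ := claim2 vm u v w r s σ hfp hinv
  have step2 : ∑ σ ∈ matchings (2 * N),
        ((Gset vm u v w r s).filter (fun P => ∀ a, σ (P a).1 = (P a).2)).card
      = ∑ P ∈ Gset vm u v w r s,
          ((matchings (2 * N)).filter (fun σ => ∀ a, σ (P a).1 = (P a).2)).card := by
    simp only [Finset.card_filter]
    rw [Finset.sum_comm]
  have step3 : ∀ P ∈ Gset vm u v w r s,
      ((matchings (2 * N)).filter (fun σ => ∀ a, σ (P a).1 = (P a).2)).card * K ^ t ≤ C := by
    intro P hP
    rw [mem_Gset] at hP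
    obtain ⟨-, -, hc3, hc4, hc5⟩ := hP
    have h := matchings_pairs_le (2 * N) P hc3 hc4 hc5
    rw [hcardIdx] at h
    exact h
  have main : (∑ σ ∈ matchings (2 * N), ((∏ i, (numLoops vm σ (u i)).descFactorial (r i)) *
          ∏ j, (numEdges vm σ (v j) (w j)).descFactorial (s j))) * K ^ t
      ≤ (D1 * D2) * C := by
    calc (∑ σ ∈ matchings (2 * N), ((∏ i, (numLoops vm σ (u i)).descFactorial (r i)) *
          ∏ j, (numEdges vm σ (v j) (w j)).descFactorial (s j))) * K ^ t
        ≤ (∑ P ∈ Gset vm u v w r s,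
            ((matchings (2 * N)).filter (fun σ => ∀ a, σ (P a).1 = (P a).2)).card) * K ^ t := by
          apply Nat.mul_le_mul_right
          rw [← step2]
          exact step1
      _ = ∑ P ∈ Gset vm u v w r s,
            ((matchings (2 * N)).filter (fun σ => ∀ a, σ (P a).1 = (P a).2)).card * K ^ t := by
          rw [Finset.sum_mul]
      _ ≤ ∑ _P ∈ Gset vm u v w r s, C := Finset.sum_le_sum step3
      _ = (Gset vm u v w r s).card * C := by rw [Finset.sum_const, smul_eq_mul]
      _ ≤ (D1 * D2) * C := Nat.mul_le_mul_right _ (claim4 d vm hvm u v w r s)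
  have hKcast : (K : ℝ) = 2 * (N : ℝ) - 2 * (t : ℝ) + 1 := by
    rw [hKdef]
    push_cast [htN]
    ring
  have hRHS : (∏ i, (d (u i) : ℝ) ^ (2 * r i) / (2 * (N : ℝ) - 2 * (t : ℝ) + 1) ^ (r i)) *
          ∏ j, ((d (v j) : ℝ) * (d (w j) : ℝ)) ^ (s j) /
            (2 * (N : ℝ) - 2 * (t : ℝ) + 1) ^ (s j)
      = ((D1 : ℝ) * (D2 : ℝ)) / (K : ℝ) ^ t := by
    simp only [← hKcast]
    rw [Finset.prod_div_distrib, Finset.prod_div_distrib,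
      Finset.prod_pow_eq_pow_sum, Finset.prod_pow_eq_pow_sum,
      div_mul_div_comm, ← pow_add, ← ht, hD1, hD2]
    push_cast
    ring
  rw [hRHS]
  have hsumcast : (∑ σ ∈ matchings (2 * N),
        (((∏ i, (numLoops vm σ (u i)).descFactorial (r i)) *
          ∏ j, (numEdges vm σ (v j) (w j)).descFactorial (s j) : ℕ) : ℝ))
      = ((∑ σ ∈ matchings (2 * N), ((∏ i, (numLoops vm σ (u i)).descFactorial (r i)) *
          ∏ j, (numEdges vm σ (v j) (w j)).descFactorial (s j)) : ℕ) : ℝ) := by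
    rw [Nat.cast_sum]
  rw [hsumcast]
  rw [div_le_div_iff₀ (by exact_mod_cast hCpos) (by positivity)]
  calc ((∑ σ ∈ matchings (2 * N), ((∏ i, (numLoops vm σ (u i)).descFactorial (r i)) *
          ∏ j, (numEdges vm σ (v j) (w j)).descFactorial (s j)) : ℕ) : ℝ) * (K : ℝ) ^ t
      = (((∑ σ ∈ matchings (2 * N), ((∏ i, (numLoops vm σ (u i)).descFactorial (r i)) *
          ∏ j, (numEdges vm σ (v j) (w j)).descFactorial (s j))) * K ^ t : ℕ) : ℝ) := by
        push_cast
        ring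
    _ ≤ (((D1 * D2) * C : ℕ) : ℝ) := by exact_mod_cast main
    _ = (D1 : ℝ) * (D2 : ℝ) * (C : ℝ) := by push_cast; ring
end

section
/- In the configuration model, if $\hat{G}^*$ is obtained from $G^*$ by splitting a vertex $j$ with $d_j \ge 2$ into two vertices of degrees $d_j - 1$ and $1$ (keeping all other degrees and the pairing structure), then $\mathbb{P}(G^* \text{ is simple}) \le \mathbb{P}(\hat{G}^* \text{ is simple})$; more precisely, whenever the multigraph on the original degree sequence is simple, the corresponding multigraph on the split degree sequence is simple. -/
open Finset

/-- The multigraph determined by the vertex map `vm` and configuration `σ` is simple: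
it has no loops, and any two matched pairs inducing the same (unordered) pair of
endpoints coincide. -/
def IsSimpleConfig {M n : ℕ} (vm : Fin M → Fin n) (σ : Equiv.Perm (Fin M)) : Prop :=
  (∀ x, vm (σ x) ≠ vm x) ∧
  ∀ x y, ((vm x = vm y ∧ vm (σ x) = vm (σ y)) ∨
      (vm x = vm (σ y) ∧ vm (σ x) = vm y)) → y = x ∨ y = σ x

instance {M n : ℕ} (vm : Fin M → Fin n) (σ : Equiv.Perm (Fin M)) :
    Decidable (IsSimpleConfig vm σ) := by
  unfold IsSimpleConfig; infer_instance

/-- Splitting a vertex `j` (relabelling one of its half-edges `x0` as a new vertex of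
degree 1) preserves simplicity configuration-wise; hence
`P(G* simple) ≤ P(Ĝ* simple)`. -/
theorem stmt_16 (n N : ℕ) (vm : Fin (2 * N) → Fin n) (vm' : Fin (2 * N) → Fin (n + 1))
    (x0 : Fin (2 * N)) (j : Fin n) (hx0 : vm x0 = j) (hx0' : vm' x0 = Fin.last n)
    (hother : ∀ y, y ≠ x0 → vm' y = (vm y).castSucc) :
    (∀ σ ∈ matchings (2 * N), IsSimpleConfig vm σ → IsSimpleConfig vm' σ) ∧
    (((matchings (2 * N)).filter (fun σ => IsSimpleConfig vm σ)).card : ℝ) /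
        ((matchings (2 * N)).card : ℝ)
      ≤ (((matchings (2 * N)).filter (fun σ => IsSimpleConfig vm' σ)).card : ℝ) /
        ((matchings (2 * N)).card : ℝ) := by
  have key : ∀ σ ∈ matchings (2 * N), IsSimpleConfig vm σ → IsSimpleConfig vm' σ := by
    intro σ hσ hs
    simp only [matchings, Finset.mem_filter] at hσ
    obtain ⟨-, hfpf, hinv⟩ := hσ
    obtain ⟨hloop, hmult⟩ := hs
    have hlast : ∀ y, vm' y = Fin.last n → y = x0 := by
      intro y hy
      by_contra h
      rw [hother y h] at hy
      exact absurd hy (Fin.castSucc_lt_last (vm y)).ne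
    constructor
    · intro x hx
      by_cases h1 : x = x0
      · rw [h1] at hx
        rw [hx0', hother _ (hfpf x0)] at hx
        exact (Fin.castSucc_lt_last _).ne hx
      · by_cases h2 : σ x = x0
        · rw [h2, hx0', hother _ h1] at hx
          exact (Fin.castSucc_lt_last (vm x)).ne hx.symm
        · rw [hother _ h1, hother _ h2] at hx
          exact hloop x (Fin.castSucc_injective _ hx)
    · intro x y hxy
      rcases hxy with ⟨h1, h2⟩ | ⟨h1, h2⟩
      · by_cases hx : x = x0
        · rw [hx, hx0'] at h1
          exact Or.inl ((hlast y h1.symm).trans hx.symm)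
        · by_cases hy : y = x0
          · rw [hy, hx0'] at h1
            exact absurd (hlast x h1) hx
          · by_cases hsx : σ x = x0
            · rw [hsx, hx0'] at h2
              exact Or.inl (σ.injective ((hlast (σ y) h2.symm).trans hsx.symm))
            · by_cases hsy : σ y = x0
              · rw [hsy, hx0'] at h2
                exact absurd (hlast (σ x) h2) hsx
              · rw [hother _ hx, hother _ hy] at h1
                rw [hother _ hsx, hother _ hsy] at h2
                exact hmult x y (Or.inl ⟨Fin.castSucc_injective _ h1,
                  Fin.castSucc_injective _ h2⟩)
      · by_cases hx : x = x0
        · rw [hx, hx0'] at h1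
          have hsy : σ y = x0 := hlast (σ y) h1.symm
          right
          rw [hx, ← hsy, hinv]
        · by_cases hy : y = x0
          · rw [hy, hx0'] at h2
            exact Or.inr ((hlast (σ x) h2).trans hy.symm).symm
          · by_cases hsx : σ x = x0
            · rw [hsx, hx0'] at h2
              exact absurd (hlast y h2.symm) hy
            · by_cases hsy : σ y = x0
              · rw [hsy, hx0'] at h1
                exact absurd (hlast x h1) hx
              · rw [hother _ hx, hother _ hsy] at h1
                rw [hother _ hsx, hother _ hy] at h2
                exact hmult x y (Or.inr ⟨Fin.castSucc_injective _ h1,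
                  Fin.castSucc_injective _ h2⟩)
  refine ⟨key, ?_⟩
  have hsub : (matchings (2 * N)).filter (fun σ => IsSimpleConfig vm σ) ⊆
      (matchings (2 * N)).filter (fun σ => IsSimpleConfig vm' σ) := by
    intro σ hσ
    rw [Finset.mem_filter] at hσ ⊢
    exact ⟨hσ.1, key σ hσ.1 hσ.2⟩
  have hcard := Finset.card_le_card hsub
  rcases Nat.eq_zero_or_pos (matchings (2 * N)).card with h0 | hpos
  · simp [h0]
  · gcongr
end
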